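/- For real numbers u > 0, ξ ∈ ℝ, and r = u·ξ² + 1/4, the 3×3 Hermitian matrix B = (1/(8r²u²))·[[2u³, iu², -iu²ξ], [-iu², 8ur² - 2u²ξ², 2u²ξ³], [iu²ξ, 2u²ξ³, 2r² - 2u²ξ⁴]] is positive semidefinite. -/

import Mathlib

open Complex
open scoped ComplexOrder

/-- The 3×3 Hermitian curvature block
`B = (1/(8r²u²))·[[2u³, iu², -iu²ξ], [-iu², 8ur² - 2u²ξ², 2u²ξ³], [iu²ξ, 2u²ξ³, 2r² - 2u²ξ⁴]]`. -/
noncomputable def matB (u ξ r : ℝ) : Matrix (Fin 3) (Fin 3) ℂ :=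
  ((1 / (8 * r ^ 2 * u ^ 2) : ℝ) : ℂ) •
    !![2 * (u : ℂ) ^ 3, I * (u : ℂ) ^ 2, -I * (u : ℂ) ^ 2 * (ξ : ℂ);
       -I * (u : ℂ) ^ 2, 8 * (u : ℂ) * (r : ℂ) ^ 2 - 2 * (u : ℂ) ^ 2 * (ξ : ℂ) ^ 2,
         2 * (u : ℂ) ^ 2 * (ξ : ℂ) ^ 3;
       I * (u : ℂ) ^ 2 * (ξ : ℂ), 2 * (u : ℂ) ^ 2 * (ξ : ℂ) ^ 3,
         2 * (r : ℂ) ^ 2 - 2 * (u : ℂ) ^ 2 * (ξ : ℂ) ^ 4]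

set_option maxHeartbeats 2000000 in
/-- For `u > 0`, `ξ ∈ ℝ` and `r = u·ξ² + 1/4`, the matrix `B` is positive semidefinite. -/
theorem matB_posSemidef (u ξ r : ℝ) (hu : 0 < u) (hr : r = u * ξ ^ 2 + 1 / 4) :
    (matB u ξ r).PosSemidef := by
  subst hr
  set r : ℝ := u * ξ ^ 2 + 1 / 4 with hr
  have hrpos : 0 < r := by rw [hr]; nlinarith [sq_nonneg ξ]
  have hr' : (r : ℂ) = (u : ℂ) * (ξ : ℂ) ^ 2 + 1 / 4 := by
    rw [hr]; push_cast; ring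
  clear_value r
  set C : Matrix (Fin 2) (Fin 3) ℂ :=
      !![2 * (u : ℂ), I, -I * (ξ : ℂ);
         0, 4 * (u : ℂ) * (ξ : ℂ), 1] with hC
  set d : Fin 2 → ℂ := ![((1 / (16 * r ^ 2 * u) : ℝ) : ℂ), ((1 / (16 * r * u ^ 2) : ℝ) : ℂ)]
    with hd
  have hdpsd : (Matrix.diagonal d).PosSemidef := by
    rw [Matrix.posSemidef_diagonal_iff]
    intro i
    fin_cases i <;> exact Complex.zero_le_real.mpr (by positivity)
  have key : matB u ξ r = C.conjTranspose * Matrix.diagonal d * C := by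
    have hu' : (u : ℂ) ≠ 0 := by exact_mod_cast hu.ne'
    have hrne : (r : ℂ) ≠ 0 := by exact_mod_cast hrpos.ne'
    ext i j
    fin_cases i <;> fin_cases j <;>
      · simp only [matB, hC, hd, Matrix.mul_apply, Matrix.conjTranspose_apply,
          Matrix.smul_apply, Matrix.of_apply, Finset.sum_singleton, Fin.default_eq_zero, Complex.star_def, Fin.sum_univ_succ, Finset.univ_unique,
          Fin.sum_univ_two, Fin.sum_univ_three, Matrix.diagonal_apply,
          Fin.isValue, Matrix.cons_val', Matrix.cons_val_zero, Matrix.cons_val_one,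
          Matrix.head_cons, Matrix.head_fin_const, Matrix.cons_val_fin_one,
          Matrix.empty_val', Matrix.cons_val_succ, map_mul, map_ofNat,
          Complex.conj_ofReal, Complex.conj_I, map_one, map_zero, smul_eq_mul]
        push_cast
        field_simp
        simp only [map_mul, map_neg, map_zero, map_one, map_ofNat, Complex.conj_ofReal, Complex.conj_I]
        rw [hr']
        ring_nf
        all_goals try simp only [Complex.I_sq]
        all_goals ring
  rw [key]
  exact hdpsd.conjTranspose_mul_mul_same C
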